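/- Glivenko's theorem: for all finite sets of propositional formulas Γ and formulas φ, Γ is classically derivable of φ if and only if Γ intuitionistically derives ¬¬φ: Γ ⊢_c φ ⟺ Γ ⊢_i ¬¬φ. -/

import Mathlib

/-- A single-conclusion entailment relation on `S`. -/
structure IsEntailment {S : Type*} [DecidableEq S] (E : Finset S → S → Prop) : Prop where
  refl : ∀ (U : Finset S) (a : S), a ∈ U → E U a
  mono : ∀ (U U' : Finset S) (a : S), E U a → E (U ∪ U') a
  cut : ∀ (V V' : Finset S) (a b : S), E V b → E (insert b V') a → E (V ∪ V') a

/-- A nucleus over an entailment relation. -/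
structure IsNucleus {S : Type*} [DecidableEq S] (E : Finset S → S → Prop) (j : S → S) : Prop where
  lj : ∀ (U : Finset S) (a b : S), E (insert a U) (j b) → E (insert (j a) U) (j b)
  rj : ∀ (U : Finset S) (b : S), E U b → E U (j b)

/-- Propositional formulas over countably many atoms. -/
inductive Fml where
  | atom : ℕ → Fml
  | top : Fml
  | bot : Fml
  | and : Fml → Fml → Fml
  | or : Fml → Fml → Fml
  | imp : Fml → Fml → Fml
  | neg : Fml → Fml
deriving DecidableEq

/-- Generators of positive propositional logic: an entailment relation closed
under the deduction rule R→ and the standard axioms for ∧, ∨, →, ⊤. -/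
structure PosGen (E : Finset Fml → Fml → Prop) : Prop where
  ent : IsEntailment E
  rimp : ∀ (Γ : Finset Fml) (φ ψ : Fml), E (insert φ Γ) ψ → E Γ (φ.imp ψ)
  andI : ∀ φ ψ : Fml, E {φ, ψ} (φ.and ψ)
  andE1 : ∀ φ ψ : Fml, E {φ.and ψ} φ
  andE2 : ∀ φ ψ : Fml, E {φ.and ψ} ψ
  orI1 : ∀ φ ψ : Fml, E {φ} (φ.or ψ)
  orI2 : ∀ φ ψ : Fml, E {ψ} (φ.or ψ)
  orE : ∀ φ ψ δ : Fml, E {φ.or ψ, φ.imp δ, ψ.imp δ} δ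
  mp : ∀ φ ψ : Fml, E {φ, φ.imp ψ} ψ
  topI : E ∅ Fml.top

/-- Generators of minimal logic: positive logic plus `¬φ ≈ φ → ⊥`. -/
structure MinGen (E : Finset Fml → Fml → Prop) extends PosGen E : Prop where
  pc1 : ∀ φ : Fml, E {φ.imp .bot} φ.neg
  pc2 : ∀ φ : Fml, E {φ.neg} (φ.imp .bot)

/-- Generators of intuitionistic logic: minimal logic plus ex falso quodlibet. -/
structure IntGen (E : Finset Fml → Fml → Prop) extends MinGen E : Prop where
  efq : ∀ φ : Fml, E {Fml.bot} φ

/-- Generators of classical logic: intuitionistic logic plus reductio ad absurdum. -/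
structure ClGen (E : Finset Fml → Fml → Prop) extends IntGen E : Prop where
  raa : ∀ φ : Fml, E {φ.neg.neg} φ

/-- Minimal propositional logic `⊢_m`. -/
def MinD (Γ : Finset Fml) (φ : Fml) : Prop :=
  ∀ E : Finset Fml → Fml → Prop, MinGen E → E Γ φ

/-- Intuitionistic propositional logic `⊢_i`. -/
def IntD (Γ : Finset Fml) (φ : Fml) : Prop :=
  ∀ E : Finset Fml → Fml → Prop, IntGen E → E Γ φ

/-- Classical propositional logic `⊢_c`. -/
def ClD (Γ : Finset Fml) (φ : Fml) : Prop :=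
  ∀ E : Finset Fml → Fml → Prop, ClGen E → E Γ φ

/-!
Double negation is a nucleus on intuitionistic entailment, so `U ⊢ ¬¬a` is again an entailment
relation. It contains every generator of classical logic: reductio ad absurdum becomes
`¬¬¬¬φ ⊢ ¬¬φ`, an instance of reflexivity, and the deduction rule survives because
`φ → ¬¬ψ ⊢ ¬¬(φ → ψ)` holds intuitionistically. As `⊢_c` is the least such relation,
`Γ ⊢_c φ` gives `Γ ⊢_i ¬¬φ`; conversely `¬¬φ ⊢_c φ`.
-/

namespace IsEntailment

variable {S : Type*} [DecidableEq S] {E : Finset S → S → Prop}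

theorem of_subset (hE : IsEntailment E) {U V : Finset S} {a : S} (h : E U a) (hUV : U ⊆ V) :
    E V a := by
  simpa [Finset.union_eq_right.mpr hUV] using hE.mono U V a h

theorem cut_self (hE : IsEntailment E) {U : Finset S} {a b : S} (hb : E U b)
    (ha : E (insert b U) a) : E U a := by
  simpa using hE.cut U U a b hb ha

theorem of_singleton (hE : IsEntailment E) {U : Finset S} {a b : S} (hba : E {b} a)
    (hb : E U b) : E U a :=
  hE.cut_self hb (hE.of_subset hba (by simp))

theorem of_mem_insert (hE : IsEntailment E) {U : Finset S} {a : S} : E (insert a U) a :=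
  hE.refl _ _ (Finset.mem_insert_self a U)

end IsEntailment

theorem IsNucleus.isEntailment {S : Type*} [DecidableEq S] {E : Finset S → S → Prop}
    {j : S → S} (hE : IsEntailment E) (hj : IsNucleus E j) :
    IsEntailment fun U a => E U (j a) where
  refl U a ha := hj.rj U a (hE.refl U a ha)
  mono U U' a h := hE.mono U U' (j a) h
  cut V V' a b hb ha := hE.cut V V' (j a) (j b) hb (hj.lj V' b a ha)

section Propositional

variable {E : Finset Fml → Fml → Prop} {Γ : Finset Fml} {φ ψ : Fml}

theorem PosGen.imp_elim (hE : PosGen E) (himp : E Γ (φ.imp ψ)) (hφ : E Γ φ) : E Γ ψ := by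
  refine hE.ent.cut_self hφ (hE.ent.cut_self (hE.ent.of_subset himp (Finset.subset_insert _ _)) ?_)
  exact hE.ent.of_subset (hE.mp φ ψ) (by simp [Finset.insert_subset_iff])

namespace MinGen

theorem neg_intro (hE : MinGen E) (h : E (insert φ Γ) .bot) : E Γ φ.neg :=
  hE.ent.of_singleton (hE.pc1 φ) (hE.rimp Γ φ .bot h)

theorem neg_elim (hE : MinGen E) (hnφ : E Γ φ.neg) (hφ : E Γ φ) : E Γ .bot :=
  hE.imp_elim (hE.ent.of_singleton (hE.pc2 φ) hnφ) hφ

theorem neg_neg_intro (hE : MinGen E) (h : E Γ φ) : E Γ φ.neg.neg :=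
  hE.neg_intro (hE.neg_elim hE.ent.of_mem_insert (hE.ent.of_subset h (Finset.subset_insert _ _)))

theorem isNucleus_neg_neg (hE : MinGen E) : IsNucleus E fun φ => φ.neg.neg where
  rj _ _ := hE.neg_neg_intro
  lj U a b h := by
    -- under `¬¬a` and `¬b`, the hypothesis `a → ¬¬b` refutes `a`
    have himp : E (insert a.neg.neg U) (a.imp b.neg.neg) :=
      hE.ent.of_subset (hE.rimp U a _ h) (Finset.subset_insert _ _)
    refine hE.neg_intro (hE.neg_elim (φ := a.neg) (hE.ent.refl _ _ (by simp)) (hE.neg_intro ?_))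
    refine hE.neg_elim (φ := b.neg) ?_ (hE.ent.refl _ _ (by simp))
    exact hE.imp_elim (hE.ent.of_subset himp (by grind)) hE.ent.of_mem_insert

end MinGen

theorem IntGen.neg_neg_imp_intro (hE : IntGen E) (h : E (insert φ Γ) ψ.neg.neg) :
    E Γ (φ.imp ψ).neg.neg := by
  have himp : E Γ (φ.imp ψ.neg.neg) := hE.rimp _ _ _ h
  apply hE.neg_intro
  set Δ := insert (φ.imp ψ).neg Γ
  have hnimp : E Δ (φ.imp ψ).neg := hE.ent.of_mem_insert
  have hnψ : E Δ ψ.neg :=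
    hE.neg_intro (hE.neg_elim (hE.ent.of_subset hnimp (Finset.subset_insert _ _))
      (hE.rimp _ _ _ (hE.ent.refl _ _ (by simp))))
  have hnφ : E Δ φ.neg :=
    hE.neg_intro (hE.neg_elim
      (hE.imp_elim (hE.ent.of_subset himp (by grind)) hE.ent.of_mem_insert)
      (hE.ent.of_subset hnψ (Finset.subset_insert _ _)))
  have hφψ : E Δ (φ.imp ψ) :=
    hE.rimp _ _ _ (hE.ent.of_singleton (hE.efq ψ)
      (hE.neg_elim (hE.ent.of_subset hnφ (Finset.subset_insert _ _)) hE.ent.of_mem_insert))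
  exact hE.neg_elim hnimp hφψ

theorem IntGen.clGen_neg_neg (hE : IntGen E) : ClGen fun U a => E U a.neg.neg where
  ent := hE.isNucleus_neg_neg.isEntailment hE.ent
  rimp _ _ _ := hE.neg_neg_imp_intro
  andI φ ψ := hE.neg_neg_intro (hE.andI φ ψ)
  andE1 φ ψ := hE.neg_neg_intro (hE.andE1 φ ψ)
  andE2 φ ψ := hE.neg_neg_intro (hE.andE2 φ ψ)
  orI1 φ ψ := hE.neg_neg_intro (hE.orI1 φ ψ)
  orI2 φ ψ := hE.neg_neg_intro (hE.orI2 φ ψ)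
  orE φ ψ δ := hE.neg_neg_intro (hE.orE φ ψ δ)
  mp φ ψ := hE.neg_neg_intro (hE.mp φ ψ)
  topI := hE.neg_neg_intro hE.topI
  pc1 φ := hE.neg_neg_intro (hE.pc1 φ)
  pc2 φ := hE.neg_neg_intro (hE.pc2 φ)
  efq φ := hE.neg_neg_intro (hE.efq φ)
  raa _ := hE.ent.refl _ _ (Finset.mem_singleton_self _)

end Propositional

/-- Glivenko's theorem: `Γ ⊢_c φ ↔ Γ ⊢_i ¬¬φ`. -/
theorem glivenko (Γ : Finset Fml) (φ : Fml) :
    ClD Γ φ ↔ IntD Γ φ.neg.neg := by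
  constructor
  · intro h E hE
    exact h _ hE.clGen_neg_neg
  · intro h E hE
    exact hE.ent.of_singleton (hE.raa φ) (h E hE.toIntGen)
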